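/- For logits f : Fin K → ℝ and temperatures 0 < T, the softmax probability of the argmax class is nondecreasing as T decreases: for 0 < T₁ ≤ T₂, if y attains max_j f(j), then exp(f(y)/T₁)/∑_j exp(f(j)/T₁) ≥ exp(f(y)/T₂)/∑_j exp(f(j)/T₂). -/

import Mathlib

/-!
Dividing through by `exp (f y / T)` writes the softmax weight of `y` as
`(∑ j, exp ((f j - f y) / T))⁻¹`. Since `y` is a maximiser, every numerator `f j - f y` is
nonpositive, so each summand grows with `T` and the weight shrinks.
-/

open Real Finset

theorem div_le_div_of_nonpos_left {α : Type*} [Field α] [LinearOrder α] [IsStrictOrderedRing α]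
    {a b c : α} (ha : a ≤ 0) (hc : 0 < c) (hcb : c ≤ b) : a / c ≤ a / b := by
  simpa only [neg_div, neg_le_neg_iff] using div_le_div_of_nonneg_left (neg_nonneg.mpr ha) hc hcb

theorem exp_div_sum_exp_eq_inv_sum_exp_sub {ι : Type*} [Fintype ι] (f : ι → ℝ) (y : ι) (T : ℝ) :
    exp (f y / T) / ∑ j, exp (f j / T) = (∑ j, exp ((f j - f y) / T))⁻¹ := by
  simp only [sub_div, exp_sub, ← Finset.sum_div, inv_div]

theorem exp_div_sum_exp_le_of_forall_le {ι : Type*} [Fintype ι] {f : ι → ℝ} {y : ι}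
    (hy : ∀ j, f j ≤ f y) {T₁ T₂ : ℝ} (h₁ : 0 < T₁) (h₁₂ : T₁ ≤ T₂) :
    exp (f y / T₂) / ∑ j, exp (f j / T₂) ≤ exp (f y / T₁) / ∑ j, exp (f j / T₁) := by
  simp only [exp_div_sum_exp_eq_inv_sum_exp_sub]
  refine inv_anti₀ (sum_pos (fun j _ => exp_pos _) ⟨y, mem_univ y⟩) (sum_le_sum fun j _ => ?_)
  exact exp_le_exp.mpr (div_le_div_of_nonpos_left (sub_nonpos.mpr (hy j)) h₁ h₁₂)

theorem softmax_max_antitone_in_temperature (K : ℕ) (hK : 0 < K) (f : Fin K → ℝ)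
    (y : Fin K)
    (hy : f y = Finset.univ.sup' (Finset.univ_nonempty_iff.mpr ⟨⟨0, hK⟩⟩) f)
    (T₁ T₂ : ℝ) (h₁ : 0 < T₁) (h₁₂ : T₁ ≤ T₂) :
    Real.exp (f y / T₂) / ∑ j, Real.exp (f j / T₂) ≤
      Real.exp (f y / T₁) / ∑ j, Real.exp (f j / T₁) :=
  exp_div_sum_exp_le_of_forall_le (fun j => hy ▸ le_sup' f (mem_univ j)) h₁ h₁₂
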